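/- If (π, π̃) is an α-coupled policy pair and ε = max_s |E_{a∼π̃(·|s)}[A_π(s,a)]|, then |η(π̃) − L_π(π̃)| ≤ 2εγα / ((1−γ)(1−γ(1−α))). -/

import Mathlib

open Finset

/-- State distribution at time `t` when executing policy `π`, starting from `ρ₀`. -/
noncomputable def stateDist {S A : Type} [Fintype S] [Fintype A]
    (P : S → A → S → ℝ) (π : S → A → ℝ) (ρ₀ : S → ℝ) : ℕ → S → ℝ
  | 0 => ρ₀
  | (t+1) => fun s' => ∑ s, ∑ a, stateDist P π ρ₀ t s * π s a * P s a s'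

/-- Unnormalized discounted state visitation frequency. -/
noncomputable def visit {S A : Type} [Fintype S] [Fintype A]
    (P : S → A → S → ℝ) (π : S → A → ℝ) (ρ₀ : S → ℝ) (γ : ℝ) (s : S) : ℝ :=
  ∑' t : ℕ, γ ^ t * stateDist P π ρ₀ t s

/-!
Write `d_t`, `d̃_t` for the state distributions of `π`, `π̃` at time `t` and
`A(s) = E_{a∼π̃(·|s)}[A_π(s,a)]`. Telescoping the Bellman equation of `π̃` against `V` gives
`η(π̃) − η(π) = ∑_t γ^t E_{d̃_t}[A]`, while `L_π(π̃) − η(π) = ∑_t γ^t E_{d_t}[A]` by definition of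
`ρ_π`. The diagonal `(s, a) ↦ c(s, a, a)` of the coupling is a sub-stochastic policy whose state
distribution lies below both `d_t` and `d̃_t` and has mass at least `(1 − α)^t`, so
`‖d̃_t − d_t‖₁ ≤ 2 (1 − (1 − α)^t)`. Summing `2 ε γ^t (1 − (1 − α)^t)` over `t` gives the bound.
-/

open Filter Topology

lemma abs_sum_mul_le_sum_abs_mul {ι : Type*} [Fintype ι] {x f : ι → ℝ} {B : ℝ}
    (hf : ∀ i, |f i| ≤ B) : |∑ i, x i * f i| ≤ (∑ i, |x i|) * B :=
  calc |∑ i, x i * f i| ≤ ∑ i, |x i| * |f i| := by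
        simpa only [abs_mul] using abs_sum_le_sum_abs (fun i => x i * f i) univ
    _ ≤ ∑ i, |x i| * B := by gcongr with i; exact hf i
    _ = (∑ i, |x i|) * B := (sum_mul ..).symm

lemma sum_abs_sub_le_of_le {ι : Type*} [Fintype ι] {x y m : ι → ℝ}
    (hx : ∀ i, m i ≤ x i) (hy : ∀ i, m i ≤ y i) (hxsum : ∑ i, x i = 1) (hysum : ∑ i, y i = 1) :
    ∑ i, |x i - y i| ≤ 2 * (1 - ∑ i, m i) :=
  calc ∑ i, |x i - y i| ≤ ∑ i, ((x i - m i) + (y i - m i)) := by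
        gcongr with i
        rw [abs_sub_le_iff]
        constructor <;> linarith [hx i, hy i]
    _ = 2 * (1 - ∑ i, m i) := by
        simp only [sum_add_distrib, sum_sub_distrib, hxsum, hysum]
        ring

lemma one_sub_le_sum_diag {A : Type*} [Fintype A] [DecidableEq A] {c : A → A → ℝ} {α : ℝ}
    (hsum : ∑ a, ∑ b, c a b = 1) (hoff : ∑ a, ∑ b, (if a ≠ b then c a b else 0) ≤ α) :
    1 - α ≤ ∑ a, c a a := by
  have hsplit : ∀ a, ∑ b, c a b = c a a + ∑ b, (if a ≠ b then c a b else 0) := fun a => by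
    have hdiag : c a a = ∑ b, if a = b then c a b else 0 := by simp
    rw [hdiag, ← sum_add_distrib]
    refine sum_congr rfl fun b _ => ?_
    by_cases h : a = b <;> simp [h]
  simp only [hsplit, sum_add_distrib] at hsum
  linarith

lemma hasSum_pow_mul_of_eq_add_mul_succ {u a : ℕ → ℝ} {γ C : ℝ} (hγ0 : 0 ≤ γ) (hγ1 : γ < 1)
    (hu : ∀ t, |u t| ≤ C) (hrec : ∀ t, u t = a t + γ * u (t + 1)) :
    HasSum (fun t => γ ^ t * a t) (u 0) := by
  have hterm : ∀ t, γ ^ t * a t = γ ^ t * u t - γ ^ (t + 1) * u (t + 1) := fun t => by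
    rw [hrec t, pow_succ]; ring
  have hpartial : ∀ T, ∑ t ∈ range T, γ ^ t * a t = u 0 - γ ^ T * u T := fun T => by
    simp only [hterm, sum_range_sub', pow_zero, one_mul]
  have ha : ∀ t, |a t| ≤ 2 * C := fun t => by
    have hγu : γ * |u (t + 1)| ≤ C := by
      nlinarith [hu (t + 1), abs_nonneg (u (t + 1))]
    calc |a t| = |u t - γ * u (t + 1)| := by rw [hrec t, add_sub_cancel_right]
      _ ≤ |u t| + γ * |u (t + 1)| :=
          (abs_sub _ _).trans_eq (by rw [abs_mul, abs_of_nonneg hγ0])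
      _ ≤ 2 * C := by linarith [hu t]
  have hsummable : Summable fun t => γ ^ t * a t := by
    refine Summable.of_norm_bounded ((summable_geometric_of_lt_one hγ0 hγ1).mul_left (2 * C))
      fun t => ?_
    rw [Real.norm_eq_abs, abs_mul, abs_of_nonneg (pow_nonneg hγ0 t), mul_comm]
    exact mul_le_mul_of_nonneg_right (ha t) (pow_nonneg hγ0 t)
  have htail : Tendsto (fun T => γ ^ T * u T) atTop (𝓝 0) := by
    refine squeeze_zero_norm (fun T => ?_)
      (by simpa using (tendsto_pow_atTop_nhds_zero_of_lt_one hγ0 hγ1).mul_const C)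
    rw [Real.norm_eq_abs, abs_mul, abs_of_nonneg (pow_nonneg hγ0 T)]
    exact mul_le_mul_of_nonneg_left (hu T) (pow_nonneg hγ0 T)
  rw [hsummable.hasSum_iff_tendsto_nat]
  simp only [hpartial]
  simpa using tendsto_const_nhds.sub htail

lemma hasSum_pow_sub_pow {γ α : ℝ} (hγ0 : 0 ≤ γ) (hγ1 : γ < 1) (hα0 : 0 ≤ α) (hα1 : α ≤ 1) :
    HasSum (fun t : ℕ => γ ^ t - (γ * (1 - α)) ^ t) (γ * α / ((1 - γ) * (1 - γ * (1 - α)))) := by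
  have hβ0 : 0 ≤ γ * (1 - α) := mul_nonneg hγ0 (by linarith)
  have hβ1 : γ * (1 - α) < 1 := by nlinarith
  have hγ1' : 1 - γ ≠ 0 := by linarith
  have hβ1' : 1 - γ * (1 - α) ≠ 0 := by linarith
  have hsum : (1 - γ)⁻¹ - (1 - γ * (1 - α))⁻¹ = γ * α / ((1 - γ) * (1 - γ * (1 - α))) := by
    field_simp
    ring
  simpa only [hsum] using
    (hasSum_geometric_of_lt_one hγ0 hγ1).sub (hasSum_geometric_of_lt_one hβ0 hβ1)

section StateDist

variable {S A : Type} [Fintype S] [Fintype A] {P : S → A → S → ℝ} {ρ₀ : S → ℝ}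

lemma sum_stateDist_succ_mul (π : S → A → ℝ) (t : ℕ) (f : S → ℝ) :
    ∑ s', stateDist P π ρ₀ (t + 1) s' * f s'
      = ∑ s, stateDist P π ρ₀ t s * ∑ a, π s a * ∑ s', P s a s' * f s' := by
  simp only [stateDist, sum_mul, mul_sum]
  rw [sum_comm]
  refine sum_congr rfl fun s _ => ?_
  rw [sum_comm]
  exact sum_congr rfl fun a _ => sum_congr rfl fun s' _ => by ring

lemma sum_stateDist_succ (hPsum : ∀ s a, ∑ s', P s a s' = 1) (π : S → A → ℝ) (t : ℕ) :
    ∑ s', stateDist P π ρ₀ (t + 1) s' = ∑ s, stateDist P π ρ₀ t s * ∑ a, π s a := by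
  simpa [hPsum] using sum_stateDist_succ_mul (P := P) (ρ₀ := ρ₀) π t 1

lemma stateDist_nonneg (hP : ∀ s a s', 0 ≤ P s a s') (hρ : ∀ s, 0 ≤ ρ₀ s) {π : S → A → ℝ}
    (hπ : ∀ s a, 0 ≤ π s a) : ∀ t s, 0 ≤ stateDist P π ρ₀ t s
  | 0, s => hρ s
  | t + 1, s' => sum_nonneg fun s _ => sum_nonneg fun a _ =>
      mul_nonneg (mul_nonneg (stateDist_nonneg hP hρ hπ t s) (hπ s a)) (hP s a s')

lemma stateDist_mono (hP : ∀ s a s', 0 ≤ P s a s') (hρ : ∀ s, 0 ≤ ρ₀ s) {π₁ π₂ : S → A → ℝ}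
    (hπ₁ : ∀ s a, 0 ≤ π₁ s a) (hπ : ∀ s a, π₁ s a ≤ π₂ s a) :
    ∀ t s, stateDist P π₁ ρ₀ t s ≤ stateDist P π₂ ρ₀ t s
  | 0, s => le_rfl
  | t + 1, s' => by
    have hπ₂ : ∀ s a, 0 ≤ π₂ s a := fun s a => (hπ₁ s a).trans (hπ s a)
    refine sum_le_sum fun s _ => sum_le_sum fun a _ => ?_
    refine mul_le_mul_of_nonneg_right ?_ (hP s a s')
    exact mul_le_mul (stateDist_mono hP hρ hπ₁ hπ t s) (hπ s a) (hπ₁ s a)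
      (stateDist_nonneg hP hρ hπ₂ t s)

lemma sum_stateDist_eq_one (hPsum : ∀ s a, ∑ s', P s a s' = 1) (hρsum : ∑ s, ρ₀ s = 1)
    {π : S → A → ℝ} (hπsum : ∀ s, ∑ a, π s a = 1) : ∀ t, ∑ s, stateDist P π ρ₀ t s = 1
  | 0 => hρsum
  | t + 1 => by
    simp only [sum_stateDist_succ hPsum, hπsum, mul_one]
    exact sum_stateDist_eq_one hPsum hρsum hπsum t

lemma pow_le_sum_stateDist (hP : ∀ s a s', 0 ≤ P s a s') (hPsum : ∀ s a, ∑ s', P s a s' = 1)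
    (hρ : ∀ s, 0 ≤ ρ₀ s) (hρsum : ∑ s, ρ₀ s = 1) {π : S → A → ℝ} (hπ : ∀ s a, 0 ≤ π s a)
    {κ : ℝ} (hκ : 0 ≤ κ) (hπκ : ∀ s, κ ≤ ∑ a, π s a) :
    ∀ t, κ ^ t ≤ ∑ s, stateDist P π ρ₀ t s
  | 0 => by simp [stateDist, hρsum]
  | t + 1 =>
    calc κ ^ (t + 1) ≤ (∑ s, stateDist P π ρ₀ t s) * κ := by
          rw [pow_succ]
          exact mul_le_mul_of_nonneg_right (pow_le_sum_stateDist hP hPsum hρ hρsum hπ hκ hπκ t) hκ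
      _ ≤ ∑ s, stateDist P π ρ₀ (t + 1) s := by
          rw [sum_stateDist_succ hPsum, sum_mul]
          gcongr with s
          · exact stateDist_nonneg hP hρ hπ t s
          · exact hπκ s

lemma sum_abs_sub_stateDist_le_of_coupling (hP : ∀ s a s', 0 ≤ P s a s')
    (hPsum : ∀ s a, ∑ s', P s a s' = 1) (hρ : ∀ s, 0 ≤ ρ₀ s) (hρsum : ∑ s, ρ₀ s = 1)
    {π πt : S → A → ℝ} (hπsum : ∀ s, ∑ a, π s a = 1) (hπtsum : ∀ s, ∑ a, πt s a = 1)
    {c : S → A → A → ℝ} (hc : ∀ s a b, 0 ≤ c s a b) (hc1 : ∀ s a, ∑ b, c s a b = π s a)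
    (hc2 : ∀ s b, ∑ a, c s a b = πt s b) {κ : ℝ} (hκ : 0 ≤ κ)
    (hdiag : ∀ s, κ ≤ ∑ a, c s a a) (t : ℕ) :
    ∑ s, |stateDist P πt ρ₀ t s - stateDist P π ρ₀ t s| ≤ 2 * (1 - κ ^ t) := by
  have hcπ : ∀ s a, c s a a ≤ π s a := fun s a => by
    rw [← hc1]; exact single_le_sum (fun b _ => hc s a b) (mem_univ a)
  have hcπt : ∀ s a, c s a a ≤ πt s a := fun s a => by
    rw [← hc2]; exact single_le_sum (fun b _ => hc s b a) (mem_univ a)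
  have hcdiag : ∀ s a, 0 ≤ c s a a := fun s a => hc s a a
  calc ∑ s, |stateDist P πt ρ₀ t s - stateDist P π ρ₀ t s|
      ≤ 2 * (1 - ∑ s, stateDist P (fun s a => c s a a) ρ₀ t s) :=
        sum_abs_sub_le_of_le (stateDist_mono hP hρ hcdiag hcπt t)
          (stateDist_mono hP hρ hcdiag hcπ t) (sum_stateDist_eq_one hPsum hρsum hπtsum t)
          (sum_stateDist_eq_one hPsum hρsum hπsum t)
    _ ≤ 2 * (1 - κ ^ t) := by
        gcongr
        exact pow_le_sum_stateDist hP hPsum hρ hρsum hcdiag hκ hdiag t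

lemma abs_sum_stateDist_mul_sub_le_of_coupling (hP : ∀ s a s', 0 ≤ P s a s')
    (hPsum : ∀ s a, ∑ s', P s a s' = 1) (hρ : ∀ s, 0 ≤ ρ₀ s) (hρsum : ∑ s, ρ₀ s = 1)
    {π πt : S → A → ℝ} (hπsum : ∀ s, ∑ a, π s a = 1) (hπtsum : ∀ s, ∑ a, πt s a = 1)
    {c : S → A → A → ℝ} (hc : ∀ s a b, 0 ≤ c s a b) (hc1 : ∀ s a, ∑ b, c s a b = π s a)
    (hc2 : ∀ s b, ∑ a, c s a b = πt s b) {κ : ℝ} (hκ : 0 ≤ κ)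
    (hdiag : ∀ s, κ ≤ ∑ a, c s a a) {f : S → ℝ} {B : ℝ} (hf : ∀ s, |f s| ≤ B) (hB : 0 ≤ B)
    (t : ℕ) :
    |∑ s, stateDist P πt ρ₀ t s * f s - ∑ s, stateDist P π ρ₀ t s * f s|
      ≤ 2 * (1 - κ ^ t) * B :=
  calc |∑ s, stateDist P πt ρ₀ t s * f s - ∑ s, stateDist P π ρ₀ t s * f s|
      = |∑ s, (stateDist P πt ρ₀ t s - stateDist P π ρ₀ t s) * f s| := by
        simp only [sub_mul, sum_sub_distrib]
    _ ≤ (∑ s, |stateDist P πt ρ₀ t s - stateDist P π ρ₀ t s|) * B :=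
        abs_sum_mul_le_sum_abs_mul hf
    _ ≤ 2 * (1 - κ ^ t) * B := by
        gcongr
        exact sum_abs_sub_stateDist_le_of_coupling hP hPsum hρ hρsum hπsum hπtsum hc hc1 hc2
          hκ hdiag t

lemma hasSum_discounted_of_bellman (hP : ∀ s a s', 0 ≤ P s a s')
    (hPsum : ∀ s a, ∑ s', P s a s' = 1) (hρ : ∀ s, 0 ≤ ρ₀ s) (hρsum : ∑ s, ρ₀ s = 1)
    {π : S → A → ℝ} (hπ : ∀ s a, 0 ≤ π s a) (hπsum : ∀ s, ∑ a, π s a = 1)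
    {γ : ℝ} (hγ0 : 0 ≤ γ) (hγ1 : γ < 1) {D g : S → ℝ}
    (hD : ∀ s, D s = g s + γ * ∑ a, π s a * ∑ s', P s a s' * D s') :
    HasSum (fun t => γ ^ t * ∑ s, stateDist P π ρ₀ t s * g s) (∑ s, ρ₀ s * D s) := by
  refine hasSum_pow_mul_of_eq_add_mul_succ (u := fun t => ∑ s, stateDist P π ρ₀ t s * D s)
    (C := ∑ s, |D s|) hγ0 hγ1 (fun t => ?_) (fun t => ?_)
  · have hD_le : ∀ s, |D s| ≤ ∑ s, |D s| := fun s =>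
      single_le_sum (f := fun s => |D s|) (fun s _ => abs_nonneg _) (mem_univ s)
    refine (abs_sum_mul_le_sum_abs_mul hD_le).trans_eq ?_
    simp only [abs_of_nonneg (stateDist_nonneg hP hρ hπ t _),
      sum_stateDist_eq_one hPsum hρsum hπsum t, one_mul]
  · rw [sum_stateDist_succ_mul, mul_sum, ← sum_add_distrib]
    refine sum_congr rfl fun s _ => ?_
    rw [hD s]
    ring

lemma hasSum_visit_mul (hP : ∀ s a s', 0 ≤ P s a s')
    (hPsum : ∀ s a, ∑ s', P s a s' = 1) (hρ : ∀ s, 0 ≤ ρ₀ s) (hρsum : ∑ s, ρ₀ s = 1)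
    {π : S → A → ℝ} (hπ : ∀ s a, 0 ≤ π s a) (hπsum : ∀ s, ∑ a, π s a = 1)
    {γ : ℝ} (hγ0 : 0 ≤ γ) (hγ1 : γ < 1) (g : S → ℝ) :
    HasSum (fun t => γ ^ t * ∑ s, stateDist P π ρ₀ t s * g s) (∑ s, visit P π ρ₀ γ s * g s) := by
  have hvisit : ∀ s, HasSum (fun t => γ ^ t * stateDist P π ρ₀ t s) (visit P π ρ₀ γ s) :=
    fun s => Summable.hasSum <| (summable_geometric_of_lt_one hγ0 hγ1).of_nonneg_of_le
      (fun t => mul_nonneg (pow_nonneg hγ0 t) (stateDist_nonneg hP hρ hπ t s))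
      (fun t => mul_le_of_le_one_right (pow_nonneg hγ0 t) <| by
        rw [← sum_stateDist_eq_one hPsum hρsum hπsum t]
        exact single_le_sum (fun s _ => stateDist_nonneg hP hρ hπ t s) (mem_univ s))
  simpa only [mul_sum, mul_assoc] using hasSum_sum fun s _ => (hvisit s).mul_right (g s)

end StateDist

lemma value_sub_eq_advantage_add {S A : Type} [Fintype S] [Fintype A] {P : S → A → S → ℝ}
    {r : S → ℝ} {γ : ℝ} {π : S → A → ℝ} (hπsum : ∀ s, ∑ a, π s a = 1) {W : S → ℝ}
    (hW : ∀ s, W s = ∑ a, π s a * (r s + γ * ∑ s', P s a s' * W s')) (V : S → ℝ) (s : S) :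
    W s - V s = ∑ a, π s a * (r s + γ * ∑ s', P s a s' * V s' - V s)
      + γ * ∑ a, π s a * ∑ s', P s a s' * (W s' - V s') := by
  have hV : ∑ a, π s a * V s = V s := by rw [← sum_mul, hπsum, one_mul]
  calc W s - V s = ∑ a, π s a * (r s + γ * ∑ s', P s a s' * W s') - ∑ a, π s a * V s := by
        rw [hV, ← hW s]
    _ = _ := by
        rw [mul_sum, ← sum_sub_distrib, ← sum_add_distrib]
        refine sum_congr rfl fun a _ => ?_
        simp only [mul_sub, sum_sub_distrib]
        ring

theorem stmt_5_general {S A : Type} [Fintype S] [Fintype A] [DecidableEq A]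
    (P : S → A → S → ℝ) (r : S → ℝ) (ρ₀ : S → ℝ) (γ : ℝ) (α : ℝ)
    (π πt : S → A → ℝ) (c : S → A → A → ℝ) (V Vt : S → ℝ) (Q Aπ : S → A → ℝ)
    (hγ0 : 0 < γ) (hγ1 : γ < 1) (hα0 : 0 ≤ α) (hα1 : α ≤ 1)
    (hPpos : ∀ s a s', 0 ≤ P s a s') (hPsum : ∀ s a, ∑ s', P s a s' = 1)
    (hρpos : ∀ s, 0 ≤ ρ₀ s) (hρsum : ∑ s, ρ₀ s = 1)
    (hπpos : ∀ s a, 0 ≤ π s a) (hπsum : ∀ s, ∑ a, π s a = 1)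
    (hπtpos : ∀ s a, 0 ≤ πt s a) (hπtsum : ∀ s, ∑ a, πt s a = 1)
    (hcpos : ∀ s a at_, 0 ≤ c s a at_)
    (hc1 : ∀ s a, ∑ at_, c s a at_ = π s a)
    (hc2 : ∀ s at_, ∑ a, c s a at_ = πt s at_)
    (hcdis : ∀ s, ∑ a, ∑ at_, (if a ≠ at_ then c s a at_ else 0) ≤ α)
    (hVt : ∀ s, Vt s = ∑ a, πt s a * (r s + γ * ∑ s', P s a s' * Vt s'))
    (hQ : ∀ s a, Q s a = r s + γ * ∑ s', P s a s' * V s')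
    (hA : ∀ s a, Aπ s a = Q s a - V s)
    (ε : ℝ)
    (hε : IsGreatest (Set.range fun s => |∑ a, πt s a * Aπ s a|) ε)
    (η ηt L : ℝ)
    (hη : η = ∑ s, ρ₀ s * V s) (hηt : ηt = ∑ s, ρ₀ s * Vt s)
    (hL : L = η + ∑ s, visit P π ρ₀ γ s * ∑ a, πt s a * Aπ s a) :
    |ηt - L| ≤ 2 * ε * γ * α / ((1 - γ) * (1 - γ * (1 - α))) := by
  set adv : S → ℝ := fun s => ∑ a, πt s a * Aπ s a
  have hε0 : 0 ≤ ε := by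
    obtain ⟨s, hs⟩ := hε.1
    exact hs ▸ abs_nonneg _
  have hadv : ∀ s, |adv s| ≤ ε := fun s => hε.2 ⟨s, rfl⟩
  have hdiff : HasSum (fun t => γ ^ t * ∑ s, stateDist P πt ρ₀ t s * adv s) (ηt - η) := by
    rw [hηt, hη, ← sum_sub_distrib]
    simp only [← mul_sub]
    refine hasSum_discounted_of_bellman hPpos hPsum hρpos hρsum hπtpos hπtsum hγ0.le hγ1
      fun s => ?_
    simp only [value_sub_eq_advantage_add hπtsum hVt V s, adv, hA, hQ]
  have hsurr : HasSum (fun t => γ ^ t * ∑ s, stateDist P π ρ₀ t s * adv s) (L - η) := by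
    rw [hL, add_sub_cancel_left]
    exact hasSum_visit_mul hPpos hPsum hρpos hρsum hπpos hπsum hγ0.le hγ1 adv
  have hdiag : ∀ s, 1 - α ≤ ∑ a, c s a a := fun s =>
    one_sub_le_sum_diag (by simp only [hc1, hπsum]) (hcdis s)
  have hterm : ∀ t, ‖γ ^ t * ∑ s, stateDist P πt ρ₀ t s * adv s
      - γ ^ t * ∑ s, stateDist P π ρ₀ t s * adv s‖ ≤ 2 * ε * (γ ^ t - (γ * (1 - α)) ^ t) :=
    fun t => calc
      _ = γ ^ t * |∑ s, stateDist P πt ρ₀ t s * adv s - ∑ s, stateDist P π ρ₀ t s * adv s| := by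
        rw [Real.norm_eq_abs, ← mul_sub, abs_mul, abs_of_nonneg (pow_nonneg hγ0.le t)]
      _ ≤ γ ^ t * (2 * (1 - (1 - α) ^ t) * ε) := by
        gcongr
        exact abs_sum_stateDist_mul_sub_le_of_coupling hPpos hPsum hρpos hρsum hπsum hπtsum
          hcpos hc1 hc2 (by linarith) hdiag hadv hε0 t
      _ = 2 * ε * (γ ^ t - (γ * (1 - α)) ^ t) := by rw [mul_pow]; ring
  calc |ηt - L| = ‖(ηt - η) - (L - η)‖ := by rw [Real.norm_eq_abs, sub_sub_sub_cancel_right]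
    _ ≤ 2 * ε * (γ * α / ((1 - γ) * (1 - γ * (1 - α)))) :=
      (hdiff.sub hsurr).norm_le_of_bounded
        ((hasSum_pow_sub_pow hγ0.le hγ1 hα0 hα1).mul_left (2 * ε)) hterm
    _ = 2 * ε * γ * α / ((1 - γ) * (1 - γ * (1 - α))) := by ring

/-- For an α-coupled policy pair, |η(π̃) − L_π(π̃)| ≤ 2εγα/((1−γ)(1−γ(1−α))). -/
theorem stmt_5 {S A : Type} [Fintype S] [Fintype A] [Nonempty S] [DecidableEq A]
    (P : S → A → S → ℝ) (r : S → ℝ) (ρ₀ : S → ℝ) (γ : ℝ) (α : ℝ)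
    (π πt : S → A → ℝ) (c : S → A → A → ℝ) (V Vt : S → ℝ) (Q Aπ : S → A → ℝ)
    (hγ0 : 0 < γ) (hγ1 : γ < 1) (hα0 : 0 ≤ α) (hα1 : α ≤ 1)
    (hPpos : ∀ s a s', 0 ≤ P s a s') (hPsum : ∀ s a, ∑ s', P s a s' = 1)
    (hρpos : ∀ s, 0 ≤ ρ₀ s) (hρsum : ∑ s, ρ₀ s = 1)
    (hπpos : ∀ s a, 0 ≤ π s a) (hπsum : ∀ s, ∑ a, π s a = 1)
    (hπtpos : ∀ s a, 0 ≤ πt s a) (hπtsum : ∀ s, ∑ a, πt s a = 1)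
    (hcpos : ∀ s a at_, 0 ≤ c s a at_)
    (hc1 : ∀ s a, ∑ at_, c s a at_ = π s a)
    (hc2 : ∀ s at_, ∑ a, c s a at_ = πt s at_)
    (hcdis : ∀ s, ∑ a, ∑ at_, (if a ≠ at_ then c s a at_ else 0) ≤ α)
    (hV : ∀ s, V s = ∑ a, π s a * (r s + γ * ∑ s', P s a s' * V s'))
    (hVt : ∀ s, Vt s = ∑ a, πt s a * (r s + γ * ∑ s', P s a s' * Vt s'))
    (hQ : ∀ s a, Q s a = r s + γ * ∑ s', P s a s' * V s')
    (hA : ∀ s a, Aπ s a = Q s a - V s)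
    (ε : ℝ)
    (hε : IsGreatest (Set.range fun s => |∑ a, πt s a * Aπ s a|) ε)
    (η ηt L : ℝ)
    (hη : η = ∑ s, ρ₀ s * V s) (hηt : ηt = ∑ s, ρ₀ s * Vt s)
    (hL : L = η + ∑ s, visit P π ρ₀ γ s * ∑ a, πt s a * Aπ s a) :
    |ηt - L| ≤ 2 * ε * γ * α / ((1 - γ) * (1 - γ * (1 - α))) :=
  stmt_5_general P r ρ₀ γ α π πt c V Vt Q Aπ hγ0 hγ1 hα0 hα1 hPpos hPsum hρpos hρsum hπpos hπsum
    hπtpos hπtsum hcpos hc1 hc2 hcdis hVt hQ hA ε hε η ηt L hη hηt hL
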